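/- Let A, B, X be n×n complex matrices with A and B positive definite, let λ₁,…,λₙ be the eigenvalues of A and ν₁,…,νₙ the eigenvalues of B, and set K̲ = min{ K((λᵢ/νⱼ)^{1/2}, 2) : i, j = 1,…,n }. If 1/2 < v < 1, then ‖(1 − v)AX + vXB‖_F² − (1 − v)²‖AX − XB‖_F² ≥ r₁‖A^{1/2} X B^{1/2} − XB‖_F² + K̲^{r̂₁} ‖A^{1−v} X B^{v}‖_F², where r = min{v, 1 − v}, r₁ = min{2r, 1 − 2r} and r̂₁ = min{2r₁, 1 − 2r₁}. -/

import Mathlib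

/-!
Write `A = U diag(λ) U*`, `B = V diag(ν) V*` and `Y = U* X V`. Every matrix in the inequality is a
double operator sum `U [f(λᵢ, νⱼ) Yᵢⱼ] V*`, whose squared Frobenius norm is
`∑ᵢⱼ f(λᵢ, νⱼ)² |Yᵢⱼ|²`, so it suffices to compare the coefficients `f(λᵢ, νⱼ)²`.
For scalars, `((1 - v) a + v b)² - (1 - v)² (a - b)² = p·ab + (1 - p)·b²` with `p = 2(1 - v)`,
a weighted mean of `x = ab` and `y = b²`. Subtracting `min(p, 1 - p) (√x - √y)²` from it leaves a
weighted mean of `√(xy)` and one of `x`, `y`, to which the Kantorovich refinement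
`K(u/s, 2)^min(q, 1 - q) u^q s^(1 - q) ≤ q u + (1 - q) s` of Young's inequality applies;
since `√(xy) / y = √(a/b)`, its constant is `K(√(λᵢ/νⱼ), 2) ≥ K̲`.
-/

open Matrix
open scoped ComplexOrder

/-- Real power of a matrix, defined for Hermitian matrices via the spectral
decomposition (functional calculus); junk value otherwise. -/
noncomputable def mrpow {n : ℕ} (A : Matrix (Fin n) (Fin n) ℂ) (t : ℝ) :
    Matrix (Fin n) (Fin n) ℂ :=
  if h : A.IsHermitian then
    (h.eigenvectorUnitary : Matrix (Fin n) (Fin n) ℂ)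
      * Matrix.diagonal (fun i => ((h.eigenvalues i ^ t : ℝ) : ℂ))
      * star (h.eigenvectorUnitary : Matrix (Fin n) (Fin n) ℂ)
  else A

/-- The squared Hilbert-Schmidt (Frobenius) norm `‖A‖_F^2`. -/
noncomputable def frobSq {n : ℕ} (A : Matrix (Fin n) (Fin n) ℂ) : ℝ :=
  ∑ i : Fin n, ∑ j : Fin n, ‖A i j‖ ^ 2

/-- The Kantorovich constant `K(t, 2) = (t + 1)^2 / (4 t)`. -/
noncomputable def Kant (t : ℝ) : ℝ := (t + 1) ^ 2 / (4 * t)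

lemma kant_nonneg {t : ℝ} (ht : 0 ≤ t) : 0 ≤ Kant t := by
  unfold Kant; positivity

lemma kant_inv (t : ℝ) : Kant t⁻¹ = Kant t := by
  rcases eq_or_ne t 0 with rfl | ht
  · simp
  unfold Kant
  field_simp
  ring

lemma kant_mul_self {t : ℝ} (ht : t ≠ 0) : Kant t * t = ((t + 1) / 2) ^ 2 := by
  unfold Kant
  field_simp
  ring

lemma kant_rpow_mul_rpow_le {t p : ℝ} (ht : 0 < t) (hp0 : 0 ≤ p) (hp : p ≤ 1 / 2) :
    Kant t ^ p * t ^ p ≤ p * t + (1 - p) := by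
  rw [← Real.mul_rpow (kant_nonneg ht.le) ht.le, kant_mul_self ht.ne',
    ← Real.rpow_natCast, ← Real.rpow_mul (by positivity)]
  calc ((t + 1) / 2) ^ ((2 : ℕ) * p) = (1 + (t - 1) / 2) ^ (2 * p) := by norm_num; ring_nf
    _ ≤ 1 + 2 * p * ((t - 1) / 2) :=
      rpow_one_add_le_one_add_mul_self (by linarith) (by linarith) (by linarith)
    _ = p * t + (1 - p) := by ring

lemma kant_young_of_le_half {u s p : ℝ} (hu : 0 < u) (hs : 0 < s) (hp0 : 0 ≤ p)
    (hp : p ≤ 1 / 2) :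
    Kant (u / s) ^ p * (u ^ p * s ^ (1 - p)) ≤ p * u + (1 - p) * s := by
  have hus : u ^ p * s ^ (1 - p) = (u / s) ^ p * s := by
    rw [Real.div_rpow hu.le hs.le, Real.rpow_sub hs, Real.rpow_one]
    field_simp
  calc Kant (u / s) ^ p * (u ^ p * s ^ (1 - p)) = Kant (u / s) ^ p * (u / s) ^ p * s := by
        rw [hus, mul_assoc]
    _ ≤ (p * (u / s) + (1 - p)) * s := by
        gcongr
        exact kant_rpow_mul_rpow_le (by positivity) hp0 hp
    _ = p * u + (1 - p) * s := by field_simp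

lemma kant_young {u s p : ℝ} (hu : 0 < u) (hs : 0 < s) (hp0 : 0 ≤ p) (hp1 : p ≤ 1) :
    Kant (u / s) ^ min p (1 - p) * (u ^ p * s ^ (1 - p)) ≤ p * u + (1 - p) * s := by
  rcases le_total p (1 / 2) with hp | hp
  · rw [min_eq_left (by linarith)]
    exact kant_young_of_le_half hu hs hp0 hp
  · rw [min_eq_right (by linarith), ← kant_inv, inv_div]
    have := kant_young_of_le_half hs hu (p := 1 - p) (by linarith) (by linarith)
    rw [sub_sub_cancel] at this
    linarith

lemma sqrt_rpow_two_mul {x : ℝ} (hx : 0 ≤ x) (p : ℝ) : √x ^ (2 * p) = x ^ p := by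
  rw [Real.rpow_mul (Real.sqrt_nonneg x), Real.rpow_two, Real.sq_sqrt hx]

lemma kant_young_refined_of_le_half {x y p : ℝ} (hx : 0 < x) (hy : 0 < y) (hp0 : 0 ≤ p)
    (hp : p ≤ 1 / 2) :
    p * (√x - √y) ^ 2 + Kant (√(x / y)) ^ min (2 * p) (1 - 2 * p) * (x ^ p * y ^ (1 - p))
      ≤ p * x + (1 - p) * y := by
  have hsx := Real.sq_sqrt hx.le
  have hsy := Real.sq_sqrt hy.le
  have hratio : √x * √y / y = √(x / y) := by
    rw [Real.sqrt_div' _ hy.le]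
    field_simp
    linarith
  have hgeom : (√x * √y) ^ (2 * p) * y ^ (1 - 2 * p) = x ^ p * y ^ (1 - p) := by
    rw [Real.mul_rpow (by positivity) (by positivity), sqrt_rpow_two_mul hx.le,
      sqrt_rpow_two_mul hy.le, mul_assoc, ← Real.rpow_add hy]
    ring_nf
  have key := kant_young (u := √x * √y) (s := y) (p := 2 * p)
    (by positivity) hy (by linarith) (by linarith)
  rw [hratio, hgeom] at key
  nlinarith

lemma kant_young_refined {x y p : ℝ} (hx : 0 < x) (hy : 0 < y) (hp0 : 0 ≤ p) (hp1 : p ≤ 1) :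
    min p (1 - p) * (√x - √y) ^ 2
        + Kant (√(x / y)) ^ min (2 * min p (1 - p)) (1 - 2 * min p (1 - p))
          * (x ^ p * y ^ (1 - p))
      ≤ p * x + (1 - p) * y := by
  rcases le_total p (1 / 2) with hp | hp
  · rw [min_eq_left (by linarith)]
    exact kant_young_refined_of_le_half hx hy hp0 hp
  · rw [min_eq_right (by linarith), ← kant_inv, ← Real.sqrt_inv, inv_div]
    have := kant_young_refined_of_le_half hy hx (p := 1 - p) (by linarith) (by linarith)
    rw [sub_sub_cancel] at this
    nlinarith

lemma kant_young_sq_refined {a b v K r₁ ρ : ℝ} (ha : 0 < a) (hb : 0 < b) (hv0 : 1 / 2 ≤ v)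
    (hv1 : v ≤ 1)
    (hr₁ : r₁ = min (2 * (1 - v)) (1 - 2 * (1 - v))) (hρ : ρ = min (2 * r₁) (1 - 2 * r₁))
    (hK0 : 0 ≤ K) (hK : K ≤ Kant √(a / b)) :
    r₁ * (a ^ (1 / 2 : ℝ) * b ^ (1 / 2 : ℝ) - b) ^ 2 + K ^ ρ * (a ^ (1 - v) * b ^ v) ^ 2
      ≤ ((1 - v) * a + v * b) ^ 2 - (1 - v) ^ 2 * (a - b) ^ 2 := by
  have hr₁0 : 0 ≤ r₁ := hr₁ ▸ le_min (by linarith) (by linarith)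
  have hr₁1 : r₁ ≤ 1 / 2 := by
    linarith [hr₁ ▸ min_le_left (2 * (1 - v)) (1 - 2 * (1 - v)),
      hr₁ ▸ min_le_right (2 * (1 - v)) (1 - 2 * (1 - v))]
  have hρ0 : 0 ≤ ρ := hρ ▸ le_min (by linarith) (by linarith)
  have key := kant_young_refined (x := a * b) (y := b ^ 2) (p := 2 * (1 - v))
    (by positivity) (by positivity) (by linarith) (by linarith)
  rw [← hr₁, ← hρ, Real.sqrt_sq hb.le, Real.sqrt_eq_rpow, Real.mul_rpow ha.le hb.le,
    show a * b / b ^ 2 = a / b by field_simp] at key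
  have hgeom :
      (a * b) ^ (2 * (1 - v)) * (b ^ 2) ^ (1 - 2 * (1 - v)) = (a ^ (1 - v) * b ^ v) ^ 2 := by
    rw [Real.mul_rpow ha.le hb.le, ← Real.rpow_natCast_mul hb.le, mul_assoc, ← Real.rpow_add hb,
      mul_pow, ← Real.rpow_mul_natCast ha.le, ← Real.rpow_mul_natCast hb.le]
    ring_nf
  rw [hgeom] at key
  have hKρ : K ^ ρ ≤ Kant √(a / b) ^ ρ := Real.rpow_le_rpow hK0 hK hρ0
  nlinarith

section

variable {n : ℕ}

lemma frobSq_eq_re_trace (M : Matrix (Fin n) (Fin n) ℂ) : frobSq M = (Mᴴ * M).trace.re := by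
  simp only [frobSq, trace, diag, mul_apply, conjTranspose_apply, Complex.re_sum]
  rw [Finset.sum_comm]
  simp only [RCLike.star_def, ← Complex.normSq_eq_conj_mul_self, Complex.ofReal_re,
    Complex.sq_norm]

lemma frobSq_unitary_mul {U : Matrix (Fin n) (Fin n) ℂ} (hU : U ∈ unitaryGroup (Fin n) ℂ)
    (M : Matrix (Fin n) (Fin n) ℂ) : frobSq (U * M) = frobSq M := by
  rw [frobSq_eq_re_trace, frobSq_eq_re_trace, conjTranspose_mul,
    ← star_eq_conjTranspose U, mul_assoc, ← mul_assoc (star _),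
    Unitary.star_mul_self_of_mem hU, one_mul]

lemma frobSq_mul_unitary (M : Matrix (Fin n) (Fin n) ℂ) {U : Matrix (Fin n) (Fin n) ℂ}
    (hU : U ∈ unitaryGroup (Fin n) ℂ) : frobSq (M * U) = frobSq M := by
  rw [frobSq_eq_re_trace, frobSq_eq_re_trace, conjTranspose_mul,
    ← star_eq_conjTranspose U, mul_assoc, trace_mul_comm, mul_assoc, mul_assoc,
    Unitary.mul_star_self_of_mem hU, mul_one]

lemma mrpow_eq {A : Matrix (Fin n) (Fin n) ℂ} (hA : A.IsHermitian) (t : ℝ) :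
    mrpow A t = (hA.eigenvectorUnitary : Matrix (Fin n) (Fin n) ℂ)
      * diagonal (fun i => ((hA.eigenvalues i ^ t : ℝ) : ℂ))
      * star (hA.eigenvectorUnitary : Matrix (Fin n) (Fin n) ℂ) := by
  rw [mrpow, dif_pos hA]

lemma mrpow_one {A : Matrix (Fin n) (Fin n) ℂ} (hA : A.IsHermitian) : mrpow A 1 = A := by
  conv_rhs => rw [hA.spectral_theorem]
  simp [mrpow_eq hA, Function.comp_def]

lemma mrpow_zero {A : Matrix (Fin n) (Fin n) ℂ} (hA : A.IsHermitian) : mrpow A 0 = 1 := by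
  simp [mrpow_eq hA]

end

section DoubleOperatorSum

variable {n : ℕ} {A B : Matrix (Fin n) (Fin n) ℂ} (hA : A.IsHermitian) (hB : B.IsHermitian)

/-- The double operator sum `∑ᵢⱼ f(λᵢ, νⱼ) Pᵢ X Qⱼ`, where `Pᵢ`, `Qⱼ` are the rank-one
projections onto the eigenvectors of `A`, `B` with eigenvalues `λᵢ`, `νⱼ`. -/
noncomputable def doubleOpSum (f : ℝ → ℝ → ℝ) (X : Matrix (Fin n) (Fin n) ℂ) :
    Matrix (Fin n) (Fin n) ℂ :=
  (hA.eigenvectorUnitary : Matrix (Fin n) (Fin n) ℂ)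
    * of (fun i j => (f (hA.eigenvalues i) (hB.eigenvalues j) : ℂ)
        * (star (hA.eigenvectorUnitary : Matrix (Fin n) (Fin n) ℂ) * X
            * (hB.eigenvectorUnitary : Matrix (Fin n) (Fin n) ℂ)) i j)
    * star (hB.eigenvectorUnitary : Matrix (Fin n) (Fin n) ℂ)

lemma doubleOpSum_add (f g : ℝ → ℝ → ℝ) (X : Matrix (Fin n) (Fin n) ℂ) :
    doubleOpSum hA hB (fun x y => f x y + g x y) X
      = doubleOpSum hA hB f X + doubleOpSum hA hB g X := by
  rw [doubleOpSum, doubleOpSum, doubleOpSum, ← add_mul, ← mul_add]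
  congr 2
  ext i j
  simp [add_mul]

lemma doubleOpSum_sub (f g : ℝ → ℝ → ℝ) (X : Matrix (Fin n) (Fin n) ℂ) :
    doubleOpSum hA hB (fun x y => f x y - g x y) X
      = doubleOpSum hA hB f X - doubleOpSum hA hB g X := by
  rw [doubleOpSum, doubleOpSum, doubleOpSum, ← sub_mul, ← mul_sub]
  congr 2
  ext i j
  simp [sub_mul]

lemma doubleOpSum_const_mul (c : ℝ) (f : ℝ → ℝ → ℝ) (X : Matrix (Fin n) (Fin n) ℂ) :
    doubleOpSum hA hB (fun x y => c * f x y) X = (c : ℂ) • doubleOpSum hA hB f X := by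
  rw [doubleOpSum, doubleOpSum, ← Matrix.smul_mul, ← Matrix.mul_smul]
  congr 2
  ext i j
  simp [mul_assoc]

lemma doubleOpSum_rpow (s t : ℝ) (X : Matrix (Fin n) (Fin n) ℂ) :
    doubleOpSum hA hB (fun x y => x ^ s * y ^ t) X = mrpow A s * X * mrpow B t := by
  have hmid : ∀ Y : Matrix (Fin n) (Fin n) ℂ,
      of (fun i j => ((hA.eigenvalues i ^ s * hB.eigenvalues j ^ t : ℝ) : ℂ) * Y i j)
        = diagonal (fun i => ((hA.eigenvalues i ^ s : ℝ) : ℂ)) * Y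
          * diagonal (fun j => ((hB.eigenvalues j ^ t : ℝ) : ℂ)) := by
    intro Y
    ext i j
    simp only [of_apply, mul_diagonal, diagonal_mul, Complex.ofReal_mul]
    ring
  rw [doubleOpSum, hmid, mrpow_eq hA, mrpow_eq hB]
  simp only [mul_assoc]

lemma doubleOpSum_fst (X : Matrix (Fin n) (Fin n) ℂ) :
    doubleOpSum hA hB (fun x _ => x) X = A * X := by
  simpa [mrpow_one hA, mrpow_zero hB] using doubleOpSum_rpow hA hB 1 0 X

lemma doubleOpSum_snd (X : Matrix (Fin n) (Fin n) ℂ) :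
    doubleOpSum hA hB (fun _ y => y) X = X * B := by
  simpa [mrpow_one hB, mrpow_zero hA] using doubleOpSum_rpow hA hB 0 1 X

lemma frobSq_doubleOpSum (f : ℝ → ℝ → ℝ) (X : Matrix (Fin n) (Fin n) ℂ) :
    frobSq (doubleOpSum hA hB f X) = ∑ i, ∑ j, f (hA.eigenvalues i) (hB.eigenvalues j) ^ 2
      * ‖(star (hA.eigenvectorUnitary : Matrix (Fin n) (Fin n) ℂ) * X
            * (hB.eigenvectorUnitary : Matrix (Fin n) (Fin n) ℂ)) i j‖ ^ 2 := by
  rw [doubleOpSum, frobSq_mul_unitary _ (Unitary.star_mem hB.eigenvectorUnitary.2),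
    frobSq_unitary_mul hA.eigenvectorUnitary.2]
  simp [frobSq, mul_pow]

end DoubleOperatorSum

theorem stmt_17_general {n : ℕ} (A B X : Matrix (Fin n) (Fin n) ℂ) (v Kmin r r1 rh1 : ℝ)
    (hA : A.PosDef) (hB : B.PosDef)
    (hK : Kmin = sInf (Set.range fun p : Fin n × Fin n =>
      Kant (Real.sqrt (hA.1.eigenvalues p.1 / hB.1.eigenvalues p.2))))
    (hr : r = min v (1 - v)) (hr1 : r1 = min (2 * r) (1 - 2 * r))
    (hrh1 : rh1 = min (2 * r1) (1 - 2 * r1))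
    (hv0 : 1 / 2 < v) (hv : v < 1) :
    frobSq (((1 - v : ℝ) : ℂ) • (A * X) + ((v : ℝ) : ℂ) • (X * B))
        - (1 - v) ^ 2 * frobSq (A * X - X * B) ≥
      r1 * frobSq (mrpow A (1 / 2) * X * mrpow B (1 / 2) - X * B)
        + Kmin ^ rh1 * frobSq (mrpow A (1 - v) * X * mrpow B v) := by
  rw [hr, min_eq_right (show 1 - v ≤ v by linarith)] at hr1
  have hK0 : 0 ≤ Kmin :=
    hK ▸ Real.sInf_nonneg (by rintro _ ⟨p, rfl⟩; exact kant_nonneg (Real.sqrt_nonneg _))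
  have hKle (i j : Fin n) : Kmin ≤ Kant √(hA.1.eigenvalues i / hB.1.eigenvalues j) :=
    hK ▸ csInf_le (Set.finite_range _).bddBelow ⟨(i, j), rfl⟩
  rw [← doubleOpSum_fst hA.1 hB.1, ← doubleOpSum_snd hA.1 hB.1, ← doubleOpSum_rpow hA.1 hB.1,
    ← doubleOpSum_rpow hA.1 hB.1, ← doubleOpSum_const_mul, ← doubleOpSum_const_mul,
    ← doubleOpSum_add, ← doubleOpSum_sub, ← doubleOpSum_sub, frobSq_doubleOpSum,
    frobSq_doubleOpSum, frobSq_doubleOpSum, frobSq_doubleOpSum]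
  set Y := star (hA.1.eigenvectorUnitary : Matrix (Fin n) (Fin n) ℂ) * X * hB.1.eigenvectorUnitary
  simp only [Finset.mul_sum, ← Finset.sum_sub_distrib, ← Finset.sum_add_distrib]
  refine Finset.sum_le_sum fun i _ => Finset.sum_le_sum fun j _ => ?_
  have := kant_young_sq_refined (hA.eigenvalues_pos i) (hB.eigenvalues_pos j) hv0.le hv.le hr1
    hrh1 hK0 (hKle i j)
  nlinarith [mul_le_mul_of_nonneg_right this (sq_nonneg ‖Y i j‖)]

theorem stmt_17 {n : ℕ} (A B X : Matrix (Fin n) (Fin n) ℂ) (v Kmin r r1 rh1 : ℝ)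
    (hn : 0 < n) (hA : A.PosDef) (hB : B.PosDef)
    (hK : Kmin = sInf (Set.range fun p : Fin n × Fin n =>
      Kant (Real.sqrt (hA.1.eigenvalues p.1 / hB.1.eigenvalues p.2))))
    (hr : r = min v (1 - v)) (hr1 : r1 = min (2 * r) (1 - 2 * r))
    (hrh1 : rh1 = min (2 * r1) (1 - 2 * r1))
    (hv0 : 1 / 2 < v) (hv : v < 1) :
    frobSq (((1 - v : ℝ) : ℂ) • (A * X) + ((v : ℝ) : ℂ) • (X * B))
        - (1 - v) ^ 2 * frobSq (A * X - X * B) ≥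
      r1 * frobSq (mrpow A (1 / 2) * X * mrpow B (1 / 2) - X * B)
        + Kmin ^ rh1 * frobSq (mrpow A (1 - v) * X * mrpow B v) :=
  stmt_17_general A B X v Kmin r r1 rh1 hA hB hK hr hr1 hrh1 hv0 hv
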